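/- Let k ≥ 1 be an integer, n ≥ 3, 0 ≤ a < (n-2)/2, 0 < b, a ≤ b < a+1, p = 2n/(n-2+2(b-a)), and let κ_{ij} > 0 and α_{ij}, β_{ij} > 1 with α_{ij} + β_{ij} = p for all 1 ≤ i, j ≤ k. Suppose u₁, …, u_k and v₁, …, v_k are continuous functions [0, ∞) → (0, ∞) satisfying, for every r ≥ 0 and every i, the integral equations u_i(r) = u_i(0) − ∫₀^r s^{2a+1-n} (∫₀^s t^{n-1-bp} Σ_{j=1}^{k} κ_{ij} u_i(t)^{α_{ij}-1} u_j(t)^{β_{ij}} dt) ds and v_i(r) = v_i(0) − ∫₀^r s^{2a+1-n} (∫₀^s t^{n-1-bp} Σ_{j=1}^{k} κ_{ij} v_i(t)^{α_{ij}-1} v_j(t)^{β_{ij}} dt) ds (all the integrals being finite; note n − bp > 0 and 2a + 2 − bp > 0 under the stated parameter assumptions, so the integrals converge). If u_i(0) = v_i(0) for all 1 ≤ i ≤ k, then u_i ≡ v_i on [0, ∞) for all 1 ≤ i ≤ k. -/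

import Mathlib

open MeasureTheory Real Filter Topology

noncomputable section

/-!
Subtracting the two integral equations, `w = v - u` satisfies
`w(r) = ∫₀^r s^c ∫₀^s t^d (N(u(t)) - N(v(t))) dt ds` with `c = 2a+1-n`, `d = n-1-bp > -1` and
`ρ = c + d + 2 = 2a+2-bp > 0`. On `[0, R]` both solutions stay in a compact box of positive
vectors, on which the smooth nonlinearity `N` is Lipschitz. Hence a bound `‖w(t)‖ ≤ A t^γ`
improves to `‖w(t)‖ ≤ C A t^(γ+ρ) / (γ+ρ)`, and iterating this Picard-type estimate from
`‖w‖ ≤ M` gives `‖w(t)‖ ≤ M (C t^ρ / ρ)^m / m!` for every `m`, so `w = 0`.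
-/

theorem exists_pos_Icc_bounds {X ι : Type*} [TopologicalSpace X] {s : Set X}
    (hs : IsCompact s) (hne : s.Nonempty) {f : ι → X → ℝ} (hf : ∀ i, ContinuousOn (f i) s)
    (hpos : ∀ i, ∀ x ∈ s, 0 < f i x) :
    ∃ m B : ι → ℝ, (∀ i, 0 < m i) ∧ ∀ x ∈ s, (fun i => f i x) ∈ Set.Icc m B := by
  have hmin : ∀ i, ∃ y ∈ s, ∀ x ∈ s, f i y ≤ f i x := fun i => hs.exists_isMinOn hne (hf i)
  have hmax : ∀ i, ∃ z ∈ s, ∀ x ∈ s, f i x ≤ f i z := fun i => hs.exists_isMaxOn hne (hf i)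
  choose y hys hy using hmin
  choose z _ hz using hmax
  exact ⟨fun i => f i (y i), fun i => f i (z i), fun i => hpos i _ (hys i),
    fun x hx => ⟨fun i => hy i x hx, fun i => hz i x hx⟩⟩

def couplingField {ι : Type*} [Fintype ι] (κ α β : ι → ι → ℝ) (x : ι → ℝ) : ι → ℝ :=
  fun i => ∑ j, κ i j * x i ^ (α i j - 1) * x j ^ β i j

theorem exists_lipschitzOnWith_couplingField {ι : Type*} [Fintype ι] (κ α β : ι → ι → ℝ)
    {m B : ι → ℝ} (hm : ∀ i, 0 < m i) :
    ∃ L, LipschitzOnWith L (couplingField κ α β) (Set.Icc m B) := by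
  refine ContDiffOn.exists_lipschitzOnWith (n := 1) (fun x hx => ContDiffAt.contDiffWithinAt ?_)
    one_ne_zero (convex_Icc m B) isCompact_Icc
  have hx : ∀ i, x i ≠ 0 := fun i => ((hm i).trans_le (hx.1 i)).ne'
  refine contDiffAt_pi.2 fun i => ContDiffAt.sum fun j _ => ?_
  exact (contDiffAt_const.mul ((contDiffAt_apply ℝ ℝ i x).rpow_const_of_ne (hx i))).mul
    ((contDiffAt_apply ℝ ℝ j x).rpow_const_of_ne (hx j))

theorem abs_integral_rpow_le {e A s : ℝ} (he : -1 < e) (hA : 0 ≤ A) (hs : 0 ≤ s) {g : ℝ → ℝ}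
    (hg : ∀ t ∈ Set.Ioc 0 s, |g t| ≤ A * t ^ e) :
    |∫ t in (0:ℝ)..s, g t| ≤ A * s ^ (e + 1) / (e + 1) := by
  have he1 : 0 < e + 1 := by linarith
  have hbound := intervalIntegral.norm_integral_le_abs_of_norm_le
    (f := g) (by rw [Set.uIoc_of_le hs]; exact ae_restrict_of_forall_mem measurableSet_Ioc hg)
    ((intervalIntegral.intervalIntegrable_rpow' he).const_mul A)
  rwa [intervalIntegral.integral_const_mul, integral_rpow (Or.inl he), zero_rpow he1.ne', sub_zero,
    abs_of_nonneg (mul_nonneg hA (div_nonneg (rpow_nonneg hs _) he1.le)), ← mul_div_assoc] at hbound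

theorem abs_integral_rpow_mul_integral_le {c e A r : ℝ} (he : -1 < e) (hce : 0 < c + e + 2)
    (hA : 0 ≤ A) (hr : 0 ≤ r) {g : ℝ → ℝ} (hg : ∀ t ∈ Set.Ioc 0 r, |g t| ≤ A * t ^ e) :
    |∫ s in (0:ℝ)..r, s ^ c * ∫ t in (0:ℝ)..s, g t|
      ≤ A * r ^ (c + e + 2) / ((e + 1) * (c + e + 2)) := by
  have he1 : 0 < e + 1 := by linarith
  have hinner : ∀ s ∈ Set.Ioc 0 r,
      |s ^ c * ∫ t in (0:ℝ)..s, g t| ≤ A / (e + 1) * s ^ (c + e + 1) := by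
    intro s hs
    have hs0 := hs.1
    rw [abs_mul, abs_of_pos (rpow_pos_of_pos hs0 c)]
    calc s ^ c * |∫ t in (0:ℝ)..s, g t| ≤ s ^ c * (A * s ^ (e + 1) / (e + 1)) :=
          mul_le_mul_of_nonneg_left (abs_integral_rpow_le he hA hs0.le
            fun t ht => hg t ⟨ht.1, ht.2.trans hs.2⟩) (rpow_nonneg hs0.le c)
      _ = A / (e + 1) * s ^ (c + e + 1) := by
          rw [add_assoc c e 1, rpow_add hs0 c]; ring
  calc |∫ s in (0:ℝ)..r, s ^ c * ∫ t in (0:ℝ)..s, g t|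
      ≤ A / (e + 1) * r ^ (c + e + 1 + 1) / (c + e + 1 + 1) :=
        abs_integral_rpow_le (by linarith) (div_nonneg hA he1.le) hr hinner
    _ = A * r ^ (c + e + 2) / ((e + 1) * (c + e + 2)) := by
        rw [add_assoc (c + e) 1 1, one_add_one_eq_two]; field_simp

theorem integral_rpow_mul_integral_sub {c d r : ℝ} (hr : 0 ≤ r) {F G : ℝ → ℝ}
    (hF : ∀ s ∈ Set.Icc 0 r, IntervalIntegrable (fun t => t ^ d * F t) volume 0 s)
    (hG : ∀ s ∈ Set.Icc 0 r, IntervalIntegrable (fun t => t ^ d * G t) volume 0 s)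
    (hF' : IntervalIntegrable (fun s => s ^ c * ∫ t in (0:ℝ)..s, t ^ d * F t) volume 0 r)
    (hG' : IntervalIntegrable (fun s => s ^ c * ∫ t in (0:ℝ)..s, t ^ d * G t) volume 0 r) :
    (∫ s in (0:ℝ)..r, s ^ c * ∫ t in (0:ℝ)..s, t ^ d * F t)
        - ∫ s in (0:ℝ)..r, s ^ c * ∫ t in (0:ℝ)..s, t ^ d * G t
      = ∫ s in (0:ℝ)..r, s ^ c * ∫ t in (0:ℝ)..s, t ^ d * (F t - G t) := by
  rw [← intervalIntegral.integral_sub hF' hG']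
  refine intervalIntegral.integral_congr fun s hs => ?_
  rw [Set.uIcc_of_le hr] at hs
  simp only [mul_sub, intervalIntegral.integral_sub (hF s hs) (hG s hs)]

theorem nonpos_of_forall_rpow_bound_improves {S : Set ℝ} (hS : S ⊆ Set.Ici 0) {w : ℝ → ℝ}
    {M C ρ : ℝ} (hM : 0 ≤ M) (hC : 0 ≤ C) (hρ : 0 < ρ) (hwM : ∀ t ∈ S, w t ≤ M)
    (himp : ∀ A γ, 0 ≤ A → 0 ≤ γ → (∀ t ∈ S, w t ≤ A * t ^ γ) →
      ∀ t ∈ S, w t ≤ C * A * t ^ (γ + ρ) / (γ + ρ)) :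
    ∀ t ∈ S, w t ≤ 0 := by
  have hiter : ∀ m : ℕ, ∀ t ∈ S, w t ≤ M * (C / ρ) ^ m / m.factorial * t ^ (m * ρ) := by
    intro m
    induction m with
    | zero => simpa using hwM
    | succ m ih =>
      intro t ht
      convert himp _ _ (by positivity) (by positivity) ih t ht using 1
      rw [show ((m + 1 : ℕ) : ℝ) * ρ = m * ρ + ρ by push_cast; ring, Nat.factorial_succ, pow_succ]
      push_cast
      field_simp
  intro t ht
  have hpow : ∀ m : ℕ, M * (C / ρ) ^ m / m.factorial * t ^ (m * ρ)
      = M * ((C / ρ * t ^ ρ) ^ m / m.factorial) := by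
    intro m
    rw [mul_comm (m : ℝ) ρ, rpow_mul_natCast (hS ht)]; ring
  have hlim : Tendsto (fun m : ℕ => M * ((C / ρ * t ^ ρ) ^ m / m.factorial)) atTop (𝓝 0) := by
    simpa using (FloorSemiring.tendsto_pow_div_factorial_atTop (C / ρ * t ^ ρ)).const_mul M
  exact ge_of_tendsto' hlim fun m => (hiter m t ht).trans_eq (hpow m)

section Volterra

variable {ι : Type*} [Fintype ι] {c d L R : ℝ} {X Y : ℝ → ι → ℝ}

theorem norm_le_rpow_of_volterra (hd : -1 < d) (hcd : 0 < c + d + 2) (hL : 0 ≤ L)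
    (hXY : ∀ r ∈ Set.Icc 0 R, ∀ i, X r i = ∫ s in (0:ℝ)..r, s ^ c * ∫ t in (0:ℝ)..s, t ^ d * Y t i)
    (hY : ∀ t ∈ Set.Icc 0 R, ‖Y t‖ ≤ L * ‖X t‖) {A γ : ℝ} (hA : 0 ≤ A) (hγ : 0 ≤ γ)
    (hX : ∀ t ∈ Set.Icc 0 R, ‖X t‖ ≤ A * t ^ γ) :
    ∀ r ∈ Set.Icc 0 R, ‖X r‖ ≤ L / (d + 1) * A * r ^ (γ + (c + d + 2)) / (γ + (c + d + 2)) := by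
  intro r hr
  set ρ := c + d + 2
  have hd1 : 0 < d + 1 := by linarith
  have hγρ : 0 < γ + ρ := by linarith
  have hB : 0 ≤ L * A * r ^ (γ + ρ) / (γ + ρ) :=
    div_nonneg (mul_nonneg (mul_nonneg hL hA) (rpow_nonneg hr.1 _)) hγρ.le
  refine (pi_norm_le_iff_of_nonneg (r := L / (d + 1) * A * r ^ (γ + ρ) / (γ + ρ))
    (div_nonneg (mul_nonneg (mul_nonneg (div_nonneg hL hd1.le) hA) (rpow_nonneg hr.1 _))
      hγρ.le)).2 fun i => ?_
  rw [Real.norm_eq_abs, hXY r hr i]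
  refine (abs_integral_rpow_mul_integral_le (e := d + γ) (by linarith) (by linarith)
    (mul_nonneg hL hA) hr.1 fun t ht => ?_).trans ?_
  · have ht' : t ∈ Set.Icc 0 R := ⟨ht.1.le, ht.2.trans hr.2⟩
    calc |t ^ d * Y t i| = t ^ d * ‖Y t i‖ := by
          rw [abs_mul, abs_of_pos (rpow_pos_of_pos ht.1 d), Real.norm_eq_abs]
      _ ≤ t ^ d * (L * (A * t ^ γ)) :=
          mul_le_mul_of_nonneg_left ((norm_le_pi_norm (Y t) i).trans
            ((hY t ht').trans (mul_le_mul_of_nonneg_left (hX t ht') hL))) (rpow_nonneg ht.1.le d)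
      _ = L * A * t ^ (d + γ) := by rw [rpow_add ht.1]; ring
  · calc L * A * r ^ (c + (d + γ) + 2) / ((d + γ + 1) * (c + (d + γ) + 2))
        = L * A * r ^ (γ + ρ) / (γ + ρ) / (d + γ + 1) := by
          rw [show c + (d + γ) + 2 = γ + ρ by ring, div_div, mul_comm (d + γ + 1)]
      _ ≤ L * A * r ^ (γ + ρ) / (γ + ρ) / (d + 1) :=
          div_le_div_of_nonneg_left hB hd1 (by linarith)
      _ = L / (d + 1) * A * r ^ (γ + ρ) / (γ + ρ) := by ring

theorem eq_zero_of_volterra (hd : -1 < d) (hcd : 0 < c + d + 2) (hL : 0 ≤ L)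
    (hX : ContinuousOn X (Set.Icc 0 R))
    (hXY : ∀ r ∈ Set.Icc 0 R, ∀ i, X r i = ∫ s in (0:ℝ)..r, s ^ c * ∫ t in (0:ℝ)..s, t ^ d * Y t i)
    (hY : ∀ t ∈ Set.Icc 0 R, ‖Y t‖ ≤ L * ‖X t‖) :
    ∀ t ∈ Set.Icc 0 R, X t = 0 := by
  obtain ⟨M, hM⟩ := isCompact_Icc.exists_bound_of_continuousOn hX
  have hvanish := nonpos_of_forall_rpow_bound_improves (fun t ht => ht.1) (le_max_right M 0)
    (div_nonneg hL (by linarith : (0:ℝ) ≤ d + 1)) hcd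
    (fun t ht => (hM t ht).trans (le_max_left M 0))
    fun A γ hA hγ hXA => norm_le_rpow_of_volterra hd hcd hL hXY hY hA hγ hXA
  exact fun t ht => norm_le_zero_iff.1 (hvanish t ht)

end Volterra

theorem henonSobolev_exponents_pos {n a b p : ℝ} (hn : 2 < n) (ha : a < (n - 2) / 2)
    (hab : a ≤ b) (hba : b < a + 1) (hp : p = 2 * n / (n - 2 + 2 * (b - a))) :
    0 < n - b * p ∧ 0 < 2 * a + 2 - b * p := by
  have hD : 0 < n - 2 + 2 * (b - a) := by linarith
  have hbp : b * p = 2 * n * b / (n - 2 + 2 * (b - a)) := by rw [hp]; ring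
  rw [hbp, sub_pos, sub_pos, div_lt_iff₀ hD, div_lt_iff₀ hD]
  constructor <;> nlinarith

theorem stmt_general {k n : ℕ} (hn : 3 ≤ n) (a b p : ℝ)
    (ha : a < ((n:ℝ)-2)/2) (hab : a ≤ b) (hba : b < a + 1)
    (hp : p = 2*(n:ℝ)/((n:ℝ)-2+2*(b-a)))
    (κ α β : Fin k → Fin k → ℝ)
    (u v : Fin k → ℝ → ℝ)
    (hucont : ∀ i, ContinuousOn (u i) (Set.Ici 0))
    (hvcont : ∀ i, ContinuousOn (v i) (Set.Ici 0))
    (hupos : ∀ i, ∀ r : ℝ, 0 ≤ r → 0 < u i r)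
    (hvpos : ∀ i, ∀ r : ℝ, 0 ≤ r → 0 < v i r)
    (huint₁ : ∀ i, ∀ s : ℝ, 0 ≤ s → IntervalIntegrable
      (fun t => t ^ ((n:ℝ)-1-b*p) * ∑ j, κ i j * u i t ^ (α i j - 1) * u j t ^ (β i j))
      volume 0 s)
    (hvint₁ : ∀ i, ∀ s : ℝ, 0 ≤ s → IntervalIntegrable
      (fun t => t ^ ((n:ℝ)-1-b*p) * ∑ j, κ i j * v i t ^ (α i j - 1) * v j t ^ (β i j))
      volume 0 s)
    (huint₂ : ∀ i, ∀ r : ℝ, 0 ≤ r → IntervalIntegrable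
      (fun s => s ^ (2*a+1-(n:ℝ)) * ∫ t in (0:ℝ)..s,
        t ^ ((n:ℝ)-1-b*p) * ∑ j, κ i j * u i t ^ (α i j - 1) * u j t ^ (β i j))
      volume 0 r)
    (hvint₂ : ∀ i, ∀ r : ℝ, 0 ≤ r → IntervalIntegrable
      (fun s => s ^ (2*a+1-(n:ℝ)) * ∫ t in (0:ℝ)..s,
        t ^ ((n:ℝ)-1-b*p) * ∑ j, κ i j * v i t ^ (α i j - 1) * v j t ^ (β i j))
      volume 0 r)
    (hueq : ∀ i, ∀ r : ℝ, 0 ≤ r →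
      u i r = u i 0 - ∫ s in (0:ℝ)..r, s ^ (2*a+1-(n:ℝ)) * ∫ t in (0:ℝ)..s,
        t ^ ((n:ℝ)-1-b*p) * ∑ j, κ i j * u i t ^ (α i j - 1) * u j t ^ (β i j))
    (hveq : ∀ i, ∀ r : ℝ, 0 ≤ r →
      v i r = v i 0 - ∫ s in (0:ℝ)..r, s ^ (2*a+1-(n:ℝ)) * ∫ t in (0:ℝ)..s,
        t ^ ((n:ℝ)-1-b*p) * ∑ j, κ i j * v i t ^ (α i j - 1) * v j t ^ (β i j))
    (h0 : ∀ i, u i 0 = v i 0) :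
    ∀ i, ∀ r : ℝ, 0 ≤ r → u i r = v i r := by
  intro i₀ R hR
  obtain ⟨hd, hρ⟩ := henonSobolev_exponents_pos (by exact_mod_cast hn) ha hab hba hp
  obtain ⟨mu, Bu, hmu, hUmem⟩ := exists_pos_Icc_bounds isCompact_Icc ⟨0, le_rfl, hR⟩
    (fun i => (hucont i).mono Set.Icc_subset_Ici_self) fun i t ht => hupos i t ht.1
  obtain ⟨mv, Bv, hmv, hVmem⟩ := exists_pos_Icc_bounds isCompact_Icc ⟨0, le_rfl, hR⟩
    (fun i => (hvcont i).mono Set.Icc_subset_Ici_self) fun i t ht => hvpos i t ht.1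
  obtain ⟨L, hL⟩ := exists_lipschitzOnWith_couplingField κ α β (m := mu ⊓ mv) (B := Bu ⊔ Bv)
    fun i => lt_min (hmu i) (hmv i)
  have hvanish := eq_zero_of_volterra (c := 2 * a + 1 - n) (d := n - 1 - b * p) (by linarith)
    (by linarith) L.2 (R := R) (X := fun t => (fun i => v i t) - fun i => u i t)
    (Y := fun t => couplingField κ α β (fun i => u i t) - couplingField κ α β (fun i => v i t))
    ((continuousOn_pi.2 fun i => (hvcont i).mono Set.Icc_subset_Ici_self).sub
      (continuousOn_pi.2 fun i => (hucont i).mono Set.Icc_subset_Ici_self))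
    (fun r hr i => ?_) fun t ht => ?_
  · exact (sub_eq_zero.1 (congrFun (hvanish R ⟨hR, le_rfl⟩) i₀)).symm
  · have hsub := integral_rpow_mul_integral_sub (c := 2 * a + 1 - n) (d := n - 1 - b * p) hr.1
      (F := fun t => couplingField κ α β (fun i => u i t) i)
      (G := fun t => couplingField κ α β (fun i => v i t) i)
      (fun s hs => huint₁ i s hs.1) (fun s hs => hvint₁ i s hs.1) (huint₂ i r hr.1)
      (hvint₂ i r hr.1)
    simp only [couplingField, Pi.sub_apply] at hsub ⊢
    rw [hueq i r hr.1, hveq i r hr.1, h0 i, ← hsub]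
    ring
  · rw [norm_sub_rev (fun i => v i t)]
    exact hL.norm_sub_le (Set.Icc_subset_Icc inf_le_left le_sup_left (hUmem t ht))
      (Set.Icc_subset_Icc inf_le_right le_sup_right (hVmem t ht))

theorem stmt {k n : ℕ} (hk : 1 ≤ k) (hn : 3 ≤ n) (a b p : ℝ)
    (ha0 : 0 ≤ a) (ha : a < ((n:ℝ)-2)/2) (hb0 : 0 < b) (hab : a ≤ b) (hba : b < a + 1)
    (hp : p = 2*(n:ℝ)/((n:ℝ)-2+2*(b-a)))
    (κ α β : Fin k → Fin k → ℝ)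
    (hκ : ∀ i j, 0 < κ i j) (hα : ∀ i j, 1 < α i j) (hβ : ∀ i j, 1 < β i j)
    (hαβ : ∀ i j, α i j + β i j = p)
    (u v : Fin k → ℝ → ℝ)
    (hucont : ∀ i, ContinuousOn (u i) (Set.Ici 0))
    (hvcont : ∀ i, ContinuousOn (v i) (Set.Ici 0))
    (hupos : ∀ i, ∀ r : ℝ, 0 ≤ r → 0 < u i r)
    (hvpos : ∀ i, ∀ r : ℝ, 0 ≤ r → 0 < v i r)
    (huint₁ : ∀ i, ∀ s : ℝ, 0 ≤ s → IntervalIntegrable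
      (fun t => t ^ ((n:ℝ)-1-b*p) * ∑ j, κ i j * u i t ^ (α i j - 1) * u j t ^ (β i j))
      volume 0 s)
    (hvint₁ : ∀ i, ∀ s : ℝ, 0 ≤ s → IntervalIntegrable
      (fun t => t ^ ((n:ℝ)-1-b*p) * ∑ j, κ i j * v i t ^ (α i j - 1) * v j t ^ (β i j))
      volume 0 s)
    (huint₂ : ∀ i, ∀ r : ℝ, 0 ≤ r → IntervalIntegrable
      (fun s => s ^ (2*a+1-(n:ℝ)) * ∫ t in (0:ℝ)..s,
        t ^ ((n:ℝ)-1-b*p) * ∑ j, κ i j * u i t ^ (α i j - 1) * u j t ^ (β i j))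
      volume 0 r)
    (hvint₂ : ∀ i, ∀ r : ℝ, 0 ≤ r → IntervalIntegrable
      (fun s => s ^ (2*a+1-(n:ℝ)) * ∫ t in (0:ℝ)..s,
        t ^ ((n:ℝ)-1-b*p) * ∑ j, κ i j * v i t ^ (α i j - 1) * v j t ^ (β i j))
      volume 0 r)
    (hueq : ∀ i, ∀ r : ℝ, 0 ≤ r →
      u i r = u i 0 - ∫ s in (0:ℝ)..r, s ^ (2*a+1-(n:ℝ)) * ∫ t in (0:ℝ)..s,
        t ^ ((n:ℝ)-1-b*p) * ∑ j, κ i j * u i t ^ (α i j - 1) * u j t ^ (β i j))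
    (hveq : ∀ i, ∀ r : ℝ, 0 ≤ r →
      v i r = v i 0 - ∫ s in (0:ℝ)..r, s ^ (2*a+1-(n:ℝ)) * ∫ t in (0:ℝ)..s,
        t ^ ((n:ℝ)-1-b*p) * ∑ j, κ i j * v i t ^ (α i j - 1) * v j t ^ (β i j))
    (h0 : ∀ i, u i 0 = v i 0) :
    ∀ i, ∀ r : ℝ, 0 ≤ r → u i r = v i r :=
  stmt_general hn a b p ha hab hba hp κ α β u v hucont hvcont hupos hvpos huint₁ hvint₁ huint₂
    hvint₂ hueq hveq h0
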